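/- arXiv:2005.05293 — 6 statements merged into one kernel-verified Lean document; each statement's English description precedes it below -/
import Mathlib

section
/- Every strong update structure is a weak update structure; that is, the GetPut axiom together with PutPut, GetGet and PutGet implies the repeat-update axiom: Put ∘ (Put ⊗ id_p) ∘ (id_S ⊗ Δ) = Put, where Δ is the comagma on p. -/
open CategoryTheory MonoidalCategory

/-- Every strong update structure is a weak update structure: PutPut, GetGet, PutGet and
GetPut together imply the repeat-update axiom. -/
theorem strong_update_is_weak {C : Type*} [Category C] [MonoidalCategory C] {S p : C}
    (put : S ⊗ p ⟶ S) (get : S ⟶ S ⊗ p) (m : p ⊗ p ⟶ p) (Δ : p ⟶ p ⊗ p)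
    (putput : (put ▷ p) ≫ put = (α_ S p p).hom ≫ (S ◁ m) ≫ put)
    (getget : get ≫ (get ▷ p) = get ≫ (S ◁ Δ) ≫ (α_ S p p).inv)
    (putget : put ≫ get = (S ◁ Δ) ≫ (α_ S p p).inv ≫ (put ▷ p))
    (getput : get ≫ put = 𝟙 S) :
    (S ◁ Δ) ≫ (α_ S p p).inv ≫ (put ▷ p) ≫ put = put := by
  have : (put ≫ get) ≫ put = put := by rw [Category.assoc, getput, Category.comp_id]
  rw [putget] at this
  simpa using this
end

section
/- In any weak update structure, the composite Put ∘ Get : S → S is idempotent. -/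
open CategoryTheory MonoidalCategory

/-- In any weak update structure, Put ∘ Get : S ⟶ S is idempotent. -/
theorem putGet_idempotent {C : Type*} [Category C] [MonoidalCategory C] {S p : C}
    (put : S ⊗ p ⟶ S) (get : S ⟶ S ⊗ p) (m : p ⊗ p ⟶ p) (Δ : p ⟶ p ⊗ p)
    (putput : (put ▷ p) ≫ put = (α_ S p p).hom ≫ (S ◁ m) ≫ put)
    (getget : get ≫ (get ▷ p) = get ≫ (S ◁ Δ) ≫ (α_ S p p).inv)
    (putget : put ≫ get = (S ◁ Δ) ≫ (α_ S p p).inv ≫ (put ▷ p))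
    (repeatUpdate : (S ◁ Δ) ≫ (α_ S p p).inv ≫ (put ▷ p) ≫ put = put) :
    (get ≫ put) ≫ (get ≫ put) = get ≫ put := by
  calc (get ≫ put) ≫ (get ≫ put) = get ≫ (put ≫ get) ≫ put := by simp
    _ = get ≫ ((S ◁ Δ) ≫ (α_ S p p).inv ≫ (put ▷ p)) ≫ put := by rw [putget]
    _ = get ≫ put := by simp only [Category.assoc]; rw [repeatUpdate]
end

section
/- Any weak update structure with a trivial update is a strong update structure, i.e. satisfies GetPut: Put ∘ Get = id_S. -/
open CategoryTheory MonoidalCategory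

/-- Any weak update structure with a trivial update is a strong update structure,
i.e. satisfies GetPut. -/
theorem weak_with_trivial_update_is_strong {C : Type*} [Category C] [MonoidalCategory C]
    {S p : C}
    (put : S ⊗ p ⟶ S) (get : S ⟶ S ⊗ p) (m : p ⊗ p ⟶ p) (Δ : p ⟶ p ⊗ p)
    (putput : (put ▷ p) ≫ put = (α_ S p p).hom ≫ (S ◁ m) ≫ put)
    (getget : get ≫ (get ▷ p) = get ≫ (S ◁ Δ) ≫ (α_ S p p).inv)
    (putget : put ≫ get = (S ◁ Δ) ≫ (α_ S p p).inv ≫ (put ▷ p))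
    (repeatUpdate : (S ◁ Δ) ≫ (α_ S p p).inv ≫ (put ▷ p) ≫ put = put)
    (e : 𝟙_ C ⟶ p)
    (trivialUpdate : (ρ_ S).inv ≫ (S ◁ e) ≫ put = 𝟙 S) :
    get ≫ put = 𝟙 S := by
  conv_lhs => rw [← Category.id_comp (get ≫ put), ← trivialUpdate]
  slice_lhs 3 4 => rw [putget]
  slice_lhs 3 6 => rw [repeatUpdate]
  exact trivialUpdate
end

section
/- Given a very-well-behaved lens (S, V, g : S → V, p : S × V → S) in a category with finite products, the tuple with Put := p, Get := ⟨id_S, g⟩ : S → S × V, magma := second projection π₂ : V × V → V, and comagma := diagonal δ_V : V → V × V forms a strong update structure (satisfies PutPut, GetGet, PutGet, GetPut). -/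
/-!
With `Get = ⟨id, g⟩`, comagma the diagonal and magma `π₂`, each update-structure law is a lens
law in disguise: the magma discards the first update, so update-structure PutPut is lens PutPut;
`Get ∘ Put = ⟨p, π₂⟩`, so PutGet is lens PutGet; GetPut is literally lens GetPut; and GetGet
holds for any map of the shape `⟨id, g⟩`, both sides being `⟨⟨id, g⟩, g⟩`.
-/

open CategoryTheory CategoryTheory.Limits

namespace CategoryTheory.Limits

variable {C : Type*} [Category C] [HasBinaryProducts C]

lemma prod.associator_hom_comp_map_id_snd (X Y Z : C) :
    (prod.associator X Y Z).hom ≫ prod.map (𝟙 X) prod.snd = prod.map prod.fst (𝟙 Z) := by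
  ext <;> simp [prod.lift_fst, prod.lift_snd]

lemma prod.map_id_diag_comp_associator_inv (X Y : C) :
    prod.map (𝟙 X) (diag Y) ≫ (prod.associator X Y Y).inv = prod.lift (𝟙 (X ⨯ Y)) prod.snd := by
  ext <;> simp [prod.lift_fst, prod.lift_snd, diag]

lemma prod.lift_id_comp_map_lift_id {X Y : C} (f : X ⟶ Y) :
    prod.lift (𝟙 X) f ≫ prod.map (prod.lift (𝟙 X) f) (𝟙 Y) = prod.lift (prod.lift (𝟙 X) f) f := by
  ext <;> simp [prod.lift_fst, prod.lift_snd]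

end CategoryTheory.Limits

/-- A very-well-behaved lens defines a strong update structure with Put := p,
Get := ⟨id, g⟩, magma := π₂ and comagma := the diagonal. -/
theorem vwb_lens_is_update_structure {C : Type*} [Category C] [HasFiniteProducts C]
    (S V : C) (g : S ⟶ V) (p : S ⨯ V ⟶ S)
    (hPutPut : prod.map p (𝟙 V) ≫ p = prod.map prod.fst (𝟙 V) ≫ p)
    (hPutGet : p ≫ g = prod.snd)
    (hGetPut : prod.lift (𝟙 S) g ≫ p = 𝟙 S) :
    -- PutPut for the update structure, with magma π₂
    (prod.map p (𝟙 V) ≫ p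
      = (prod.associator S V V).hom ≫ prod.map (𝟙 S) prod.snd ≫ p) ∧
    -- GetGet, with comagma the diagonal
    (prod.lift (𝟙 S) g ≫ prod.map (prod.lift (𝟙 S) g) (𝟙 V)
      = prod.lift (𝟙 S) g ≫ prod.map (𝟙 S) (diag V) ≫ (prod.associator S V V).inv) ∧
    -- PutGet
    (p ≫ prod.lift (𝟙 S) g
      = prod.map (𝟙 S) (diag V) ≫ (prod.associator S V V).inv ≫ prod.map p (𝟙 V)) ∧
    -- GetPut
    (prod.lift (𝟙 S) g ≫ p = 𝟙 S) := by
  refine ⟨?_, ?_, ?_, hGetPut⟩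
  · rw [hPutPut, ← Category.assoc, prod.associator_hom_comp_map_id_snd]
  · rw [prod.lift_id_comp_map_lift_id, prod.map_id_diag_comp_associator_inv, prod.comp_lift,
      Category.comp_id, prod.lift_snd]
  · rw [← Category.assoc, prod.map_id_diag_comp_associator_inv, prod.lift_map, Category.comp_id,
      Category.id_comp, prod.comp_lift, Category.comp_id, hPutGet]
end

section
/- In a cartesian monoidal category, if a very-well-behaved lens (viewed as an update structure with magma π₂ and comagma δ_V) admits a trivial update e : 1 → V (i.e. p ∘ ⟨id_S, e ∘ !⟩ = id_S), then the Put is separable: p = π₁ : S × V → S. -/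
open CategoryTheory CategoryTheory.Limits

/-- A vwb lens with a trivial update has separable Put: p = π₁. -/
theorem vwb_lens_trivial_update_separable {C : Type*} [Category C] [HasFiniteProducts C]
    (S V : C) (g : S ⟶ V) (p : S ⨯ V ⟶ S)
    (hPutPut : prod.map p (𝟙 V) ≫ p = prod.map prod.fst (𝟙 V) ≫ p)
    (hPutGet : p ≫ g = prod.snd)
    (hGetPut : prod.lift (𝟙 S) g ≫ p = 𝟙 S)
    (e : ⊤_ C ⟶ V)
    (hTrivialUpdate : prod.lift (𝟙 S) (terminal.from S ≫ e) ≫ p = 𝟙 S) :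
    p = prod.fst := by
  calc p = p ≫ (prod.lift (𝟙 S) (terminal.from S ≫ e) ≫ p) := by
            rw [hTrivialUpdate, Category.comp_id]
    _ = (prod.lift (𝟙 (S ⨯ V)) (terminal.from (S ⨯ V) ≫ e) ≫ prod.map p (𝟙 V)) ≫ p := by
            rw [← Category.assoc, prod.comp_lift, prod.lift_map]
            rw [← Category.assoc, terminal.comp_from]; simp
    _ = prod.lift (𝟙 (S ⨯ V)) (terminal.from (S ⨯ V) ≫ e) ≫ prod.map prod.fst (𝟙 V) ≫ p := by
            rw [Category.assoc, hPutPut]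
    _ = prod.fst ≫ (prod.lift (𝟙 S) (terminal.from S ≫ e) ≫ p) := by
            rw [← Category.assoc, ← Category.assoc, prod.lift_map, prod.comp_lift]
            rw [← Category.assoc, terminal.comp_from]; simp
    _ = prod.fst := by rw [hTrivialUpdate, Category.comp_id]
end

section
/- In Set, define S = p × F with F = {safe, breached}, Put(⟨q, x⟩, q') = ⟨q', breached⟩, Get(⟨q, x⟩) = (⟨q, breached⟩, q), m(q, q') = q' (right projection), Δ(q) = (q, q) (diagonal). Then (Put, Get, m, Δ) is a weak update structure: it satisfies PutPut, GetGet, PutGet and repeat-update, but fails GetPut (Put ∘ Get ≠ id when the flag component is safe, provided p is nonempty). -/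
/-- The security-flagged database in Set: S = p × Bool (flag `true` = breached),
Put(⟨q,x⟩,q') = ⟨q', breached⟩, Get(⟨q,x⟩) = (⟨q, breached⟩, q), m = second projection,
Δ = diagonal.  This is a weak update structure (PutPut, GetGet, PutGet, repeat-update
hold) but GetPut fails whenever p is nonempty. -/
theorem security_flagged_database (p : Type*)
    (Put : (p × Bool) × p → p × Bool) (Get : p × Bool → (p × Bool) × p)
    (m : p × p → p) (Δ : p → p × p)
    (hPut : ∀ q x q', Put ((q, x), q') = (q', true))
    (hGet : ∀ q x, Get (q, x) = ((q, true), q))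
    (hm : ∀ q q', m (q, q') = q')
    (hΔ : ∀ q, Δ q = (q, q)) :
    -- PutPut
    (∀ s v₁ v₂, Put (Put (s, v₁), v₂) = Put (s, m (v₁, v₂))) ∧
    -- GetGet
    (∀ s : p × Bool, ((Get (Get s).1).1, ((Get (Get s).1).2, (Get s).2))
      = ((Get s).1, Δ (Get s).2)) ∧
    -- PutGet
    (∀ s v, Get (Put (s, v)) = (Put (s, v), v)) ∧
    -- repeat-update
    (∀ s v, Put (Put (s, v), v) = Put (s, v)) ∧
    -- GetPut fails, provided p is nonempty
    (Nonempty p → ¬ ∀ s : p × Bool, Put (Get s) = s) := by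
  refine ⟨?_, ?_, ?_, ?_, ?_⟩
  · rintro ⟨q, x⟩ v₁ v₂; simp [hPut, hm]
  · rintro ⟨q, x⟩; simp [hGet, hΔ]
  · rintro ⟨q, x⟩ v; simp [hPut, hGet]
  · rintro ⟨q, x⟩ v; simp [hPut]
  · rintro ⟨q⟩ h
    have := h (q, false)
    simp [hGet, hPut] at this
end
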